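/- arXiv:2002.03539 — 8 statements merged into one kernel-verified Lean document; each statement's English description precedes it below -/
import Mathlib

section
/- For every 3-regular bipartite graph G, there exist two linear orders on the vertex set of G such that for every edge {u,v} of G, the vertices u and v are consecutive (adjacent positions) in at least one of the two linear orders. -/
/-!
By König's theorem a cubic bipartite graph is the union of three perfect matchings `m₁, m₂, m₃`,
viewed as fixed-point-free involutions of the vertex set. The unions `m₁ ∪ m₂` and `m₁ ∪ m₃` are
disjoint unions of even cycles of length at least four. Cutting one `m₁`-edge in every cycle and
concatenating the resulting paths gives two linear orders in which every uncut edge joins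
consecutive vertices. Each cycle contains at least two `m₁`-edges and each `m₁`-edge lies on exactly
one cycle of each family, so by Hall's theorem the cut edges can be chosen pairwise distinct: then
no `m₁`-edge is cut in both orders.
-/

def Consec {V : Type*} (L : LinearOrder V) (u v : V) : Prop :=
  u ≠ v ∧ ∀ w : V, ¬ ((L.lt u w ∧ L.lt w v) ∨ (L.lt v w ∧ L.lt w u))

open Finset Function Equiv

lemma Consec.symm {V : Type*} {L : LinearOrder V} {u v : V} (h : Consec L u v) :
    Consec L v u :=
  ⟨h.1.symm, fun w hw => h.2 w hw.symm⟩

lemma consec_lift'_of_covBy {V α : Type*} [LinearOrder α] {f : V → α} (hf : Injective f)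
    {u v : V} (h : f u ⋖ f v) : Consec (LinearOrder.lift' f hf) u v :=
  ⟨fun huv => h.lt.ne (congrArg f huv), fun _ hw => hw.elim (fun hw => h.2 hw.1 hw.2)
    (fun hw => lt_asymm h.lt (show f v < f u from lt_trans (α := α) hw.1 hw.2))⟩

theorem Finset.exists_injective_forall_mem_of_card_le {ι α : Type*} [DecidableEq α] [Fintype ι]
    (t : ι → Finset α) {k : ℕ} (hk : 0 < k) (hle : ∀ i, k ≤ #(t i))
    (hge : ∀ a, #{i | a ∈ t i} ≤ k) :
    ∃ f : ι → α, Injective f ∧ ∀ i, f i ∈ t i := by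
  refine (all_card_le_biUnion_card_iff_exists_injective t).1 fun s => ?_
  refine Nat.le_of_mul_le_mul_right ?_ hk
  refine card_mul_le_card_mul (fun i a => a ∈ t i) (fun i hi => ?_) (fun a _ => ?_)
  · rw [bipartiteAbove, filter_mem_eq_inter, inter_eq_right.2 (subset_biUnion_of_mem t hi)]
    exact hle i
  · exact (card_le_card (filter_subset_filter _ (subset_univ s))).trans (hge a)

theorem Setoid.exists_disjoint_sections {V : Type*} [Finite V] {s₁ s₂ : Setoid V} (p : V → Prop)
    (h₁ : ∀ q : Quotient s₁, 2 ≤ {u | p u ∧ ⟦u⟧ = q}.ncard)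
    (h₂ : ∀ q : Quotient s₂, 2 ≤ {u | p u ∧ ⟦u⟧ = q}.ncard) :
    ∃ (b₁ : Quotient s₁ → V) (b₂ : Quotient s₂ → V), (∀ q, p (b₁ q) ∧ ⟦b₁ q⟧ = q) ∧
      (∀ q, p (b₂ q) ∧ ⟦b₂ q⟧ = q) ∧ ∀ q₁ q₂, b₁ q₁ ≠ b₂ q₂ := by
  classical
  have := Fintype.ofFinite V
  have := Fintype.ofFinite (Quotient s₁)
  have := Fintype.ofFinite (Quotient s₂)
  let t : Quotient s₁ ⊕ Quotient s₂ → Finset V :=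
    Sum.elim (fun q => ({u | p u ∧ ⟦u⟧ = q} : Finset V)) (fun q => ({u | p u ∧ ⟦u⟧ = q} : Finset V))
  have hle : ∀ i, 2 ≤ #(t i) := by
    rintro (q | q)
    · simpa [t, Set.ncard_eq_toFinset_card'] using h₁ q
    · simpa [t, Set.ncard_eq_toFinset_card'] using h₂ q
  have hge (a : V) : #{i | a ∈ t i} ≤ 2 := by
    refine (card_le_card (t := {.inl ⟦a⟧, .inr ⟦a⟧}) fun i hi => ?_).trans card_le_two
    rcases i with q | q <;> simp_all [t]
  obtain ⟨r, hr, hrt⟩ := exists_injective_forall_mem_of_card_le t two_pos hle hge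
  exact ⟨r ∘ Sum.inl, r ∘ Sum.inr, fun q => by simpa [t] using hrt (.inl q),
    fun q => by simpa [t] using hrt (.inr q), fun _ _ h => Sum.inl_ne_inr (hr h)⟩

lemma Equiv.Perm.quotientMk_apply {V : Type*} (ρ : Perm V) (v : V) :
    (⟦ρ v⟧ : Quotient (SameCycle.setoid ρ)) = ⟦v⟧ :=
  Quotient.sound (sameCycle_apply_left.2 (SameCycle.refl ρ v))

theorem Equiv.Perm.find_pow_eq_apply_eq_succ {α : Type*} [DecidableEq α] {ρ : Perm α} {x y : α}
    (h : ∃ n, (ρ ^ n) x = y) (h' : ∃ n, (ρ ^ n) x = ρ y) (hne : ρ y ≠ x) :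
    Nat.find h' = Nat.find h + 1 := by
  refine (Nat.find_eq_iff h').2 ⟨by rw [pow_succ', mul_apply, Nat.find_spec h], ?_⟩
  rintro (_ | n) hn hxy
  · exact hne hxy.symm
  · rw [pow_succ', mul_apply, ρ.injective.eq_iff] at hxy
    exact Nat.find_min h (by omega) hxy

theorem Equiv.Perm.exists_linearOrder_consec {V : Type*} [Finite V] (ρ : Perm V)
    (b : Quotient (SameCycle.setoid ρ) → V) (hb : ∀ q, ⟦b q⟧ = q) :
    ∃ L : LinearOrder V, ∀ v, ρ v ≠ b ⟦v⟧ → Consec L v (ρ v) := by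
  -- List the cycles one after another, each starting at its chosen point `b q`.
  classical
  obtain ⟨n, ⟨e⟩⟩ := Finite.exists_equiv_fin V
  have hex (v : V) : ∃ k, (ρ ^ k) (b ⟦v⟧) = v :=
    (Quotient.exact (hb ⟦v⟧) : ρ.SameCycle (b ⟦v⟧) v).exists_nat_pow_eq
  let f (v : V) : Fin n ×ₗ ℕ := toLex (e (b ⟦v⟧), Nat.find (hex v))
  have hf : Injective f := fun v w hvw => by
    obtain ⟨hb, hk⟩ := Prod.ext_iff.1 (toLex.injective hvw)
    simp only [e.injective.eq_iff] at hb hk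
    have hv := Nat.find_spec (hex v)
    rw [hk, hb] at hv
    exact hv.symm.trans (Nat.find_spec (hex w))
  refine ⟨LinearOrder.lift' f hf, fun v hv => consec_lift'_of_covBy hf ?_⟩
  have hq := ρ.quotientMk_apply v
  have h' : ∃ k, (ρ ^ k) (b ⟦v⟧) = ρ v := hq ▸ hex (ρ v)
  have hsucc : Nat.find (hex (ρ v)) = Nat.find (hex v) + 1 := by
    rw [← ρ.find_pow_eq_apply_eq_succ (hex v) h' hv]
    exact Nat.find_congr' (by rw [hq])
  show toLex (e (b ⟦v⟧), Nat.find (hex v)) ⋖ toLex (e (b ⟦ρ v⟧), Nat.find (hex (ρ v)))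
  rw [hsucc, hq, Prod.Lex.toLex_covBy_toLex_iff]
  exact Or.inl ⟨rfl, Order.covBy_add_one _⟩

theorem Equiv.Perm.two_le_ncard_mem_cycle {V : Type*} [Finite V] {ρ : Perm V} {p : V → Prop}
    (hp : ∀ v, p (ρ v) ↔ ¬ p v) (hρ : ∀ v, ρ (ρ v) ≠ v) (q : Quotient (SameCycle.setoid ρ)) :
    2 ≤ {u | p u ∧ ⟦u⟧ = q}.ncard := by
  induction q using Quotient.ind with | _ v => ?_
  obtain ⟨u, hu, huv⟩ : ∃ u, p u ∧ (⟦u⟧ : Quotient (SameCycle.setoid ρ)) = ⟦v⟧ := by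
    by_cases h : p v
    · exact ⟨v, h, rfl⟩
    · exact ⟨ρ v, (hp v).2 h, ρ.quotientMk_apply v⟩
  rw [← Set.ncard_pair (hρ u).symm]
  refine Set.ncard_le_ncard fun x hx => ?_
  rcases hx with rfl | rfl
  · exact ⟨hu, huv⟩
  · simp only [Set.mem_ofPred_eq, hp, not_not, ρ.quotientMk_apply]
    exact ⟨hu, huv⟩

lemma Function.Involutive.forall_of_apply_iff_not {V : Type*} {m : V → V} (hm : Involutive m)
    {q : V → Prop} (hq : ∀ v, q (m v) ↔ ¬ q v) {R : V → V → Prop} (hR : ∀ u v, R u v → R v u)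
    (h : ∀ v, q v → R v (m v)) (v : V) : R v (m v) := by
  by_cases hv : q v
  · exact h v hv
  · simpa only [hm v] using hR _ _ (h (m v) ((hq v).2 hv))

section Alternating

variable {V : Type*} (p : V → Prop) [DecidablePred p] {f g : V → V}

lemma leftInverse_ite (hf : Involutive f) (hg : Involutive g) (hpf : ∀ v, p (f v) ↔ ¬ p v)
    (hpg : ∀ v, p (g v) ↔ ¬ p v) :
    LeftInverse (fun v => if p v then f v else g v) (fun v => if p v then g v else f v) := by
  intro v
  by_cases h : p v
  · simp [h, hpg, hg v]
  · simp [h, hpf, hf v]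

/-- Follows `g` from points of `p` and `f` from the others: its cycles are the cycles of the
2-regular graph `f ∪ g`. -/
def alternatingPerm (hf : Involutive f) (hg : Involutive g) (hpf : ∀ v, p (f v) ↔ ¬ p v)
    (hpg : ∀ v, p (g v) ↔ ¬ p v) : Perm V where
  toFun v := if p v then g v else f v
  invFun v := if p v then f v else g v
  left_inv := leftInverse_ite p hf hg hpf hpg
  right_inv := leftInverse_ite p hg hf hpg hpf

variable {p} (hf : Involutive f) (hg : Involutive g) (hpf : ∀ v, p (f v) ↔ ¬ p v)
  (hpg : ∀ v, p (g v) ↔ ¬ p v)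

lemma alternatingPerm_apply_of_pos {v : V} (hv : p v) :
    alternatingPerm p hf hg hpf hpg v = g v :=
  if_pos hv

lemma alternatingPerm_apply_of_neg {v : V} (hv : ¬ p v) :
    alternatingPerm p hf hg hpf hpg v = f v :=
  if_neg hv

lemma alternatingPerm_apply_iff (v : V) : p (alternatingPerm p hf hg hpf hpg v) ↔ ¬ p v := by
  by_cases hv : p v
  · simp [alternatingPerm_apply_of_pos _ _ _ _ hv, hpg, hv]
  · simp [alternatingPerm_apply_of_neg _ _ _ _ hv, hpf, hv]

lemma alternatingPerm_apply_apply_ne (hfg : ∀ v, f v ≠ g v) (v : V) :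
    alternatingPerm p hf hg hpf hpg (alternatingPerm p hf hg hpf hpg v) ≠ v := by
  by_cases hv : p v
  · rw [alternatingPerm_apply_of_pos _ _ _ _ hv,
      alternatingPerm_apply_of_neg _ _ _ _ ((hpg v).not_left.2 hv)]
    exact fun h => hfg (g v) (by rw [h, hg v])
  · rw [alternatingPerm_apply_of_neg _ _ _ _ hv,
      alternatingPerm_apply_of_pos _ _ _ _ ((hpf v).2 hv)]
    exact fun h => hfg (f v) (by rw [h, hf v])

end Alternating

theorem exists_linearOrders_consec_of_involutive {V : Type*} [Finite V] (p : V → Prop)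
    [DecidablePred p] {m₁ m₂ m₃ : V → V} (h₁ : Involutive m₁) (h₂ : Involutive m₂)
    (h₃ : Involutive m₃) (hp₁ : ∀ v, p (m₁ v) ↔ ¬ p v) (hp₂ : ∀ v, p (m₂ v) ↔ ¬ p v)
    (hp₃ : ∀ v, p (m₃ v) ↔ ¬ p v) (h₁₂ : ∀ v, m₁ v ≠ m₂ v) (h₁₃ : ∀ v, m₁ v ≠ m₃ v) :
    ∃ L₁ L₂ : LinearOrder V, ∀ v,
      Consec L₁ v (m₂ v) ∧ Consec L₂ v (m₃ v) ∧ (Consec L₁ v (m₁ v) ∨ Consec L₂ v (m₁ v)) := by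
  set ρ₁ := alternatingPerm p h₁ h₂ hp₁ hp₂
  set ρ₂ := alternatingPerm p h₁ h₃ hp₁ hp₃
  obtain ⟨b₁, b₂, hb₁, hb₂, hb⟩ := Setoid.exists_disjoint_sections p
    (Perm.two_le_ncard_mem_cycle (alternatingPerm_apply_iff h₁ h₂ hp₁ hp₂)
      (alternatingPerm_apply_apply_ne h₁ h₂ hp₁ hp₂ h₁₂))
    (Perm.two_le_ncard_mem_cycle (alternatingPerm_apply_iff h₁ h₃ hp₁ hp₃)
      (alternatingPerm_apply_apply_ne h₁ h₃ hp₁ hp₃ h₁₃))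
  obtain ⟨L₁, hL₁⟩ := ρ₁.exists_linearOrder_consec b₁ fun q => (hb₁ q).2
  obtain ⟨L₂, hL₂⟩ := ρ₂.exists_linearOrder_consec b₂ fun q => (hb₂ q).2
  -- A cut edge enters a chosen point, which lies in `p`, so it is an `m₁`-edge.
  have hm₂ (v : V) (hv : p v) : Consec L₁ v (m₂ v) := by
    rw [← alternatingPerm_apply_of_pos h₁ h₂ hp₁ hp₂ hv]
    exact hL₁ v fun h => (alternatingPerm_apply_iff h₁ h₂ hp₁ hp₂ v).1 (h ▸ (hb₁ _).1) hv
  have hm₃ (v : V) (hv : p v) : Consec L₂ v (m₃ v) := by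
    rw [← alternatingPerm_apply_of_pos h₁ h₃ hp₁ hp₃ hv]
    exact hL₂ v fun h => (alternatingPerm_apply_iff h₁ h₃ hp₁ hp₃ v).1 (h ▸ (hb₂ _).1) hv
  have hm₁ (v : V) (hv : ¬ p v) : Consec L₁ v (m₁ v) ∨ Consec L₂ v (m₁ v) := by
    have e₁ : ρ₁ v = m₁ v := alternatingPerm_apply_of_neg h₁ h₂ hp₁ hp₂ hv
    have e₂ : ρ₂ v = m₁ v := alternatingPerm_apply_of_neg h₁ h₃ hp₁ hp₃ hv
    by_cases hcut : ρ₁ v = b₁ ⟦v⟧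
    · exact .inr (e₂ ▸ hL₂ v fun h => hb _ _ (hcut ▸ h ▸ e₁.trans e₂.symm))
    · exact .inl (e₁ ▸ hL₁ v hcut)
  refine ⟨L₁, L₂, fun v => ⟨?_, ?_, ?_⟩⟩
  · exact h₂.forall_of_apply_iff_not (R := Consec L₁) hp₂ (fun _ _ => Consec.symm) hm₂ v
  · exact h₃.forall_of_apply_iff_not (R := Consec L₂) hp₃ (fun _ _ => Consec.symm) hm₃ v
  · exact h₁.forall_of_apply_iff_not (R := fun u w => Consec L₁ u w ∨ Consec L₂ u w)
      (fun v => (hp₁ v).not) (fun _ _ => Or.imp Consec.symm Consec.symm) hm₁ v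

namespace SimpleGraph

variable {V : Type*} {G : SimpleGraph V}

lemma Coloring.eq_zero_iff_ne_zero_of_adj (C : G.Coloring (Fin 2)) {u v : V} (h : G.Adj u v) :
    C u = 0 ↔ ¬ C v = 0 := by
  have := C.valid h
  omega

theorem Colorable.exists_involutive_adj (hG : G.Colorable 2) {σ : Perm V}
    (hσ : ∀ v, G.Adj v (σ v)) : ∃ m : V → V, Involutive m ∧ ∀ v, G.Adj v (m v) := by
  -- Every step of `σ` changes sides, so `σ` maps the side `C = 0` bijectively onto the other.
  classical
  obtain ⟨C⟩ := hG
  have hσ' (v : V) : G.Adj (σ.symm v) v := by simpa using hσ (σ.symm v)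
  refine ⟨fun v => if C v = 0 then σ v else σ.symm v, fun v => ?_, fun v => ?_⟩
  · by_cases hv : C v = 0
    · simp [hv, (C.eq_zero_iff_ne_zero_of_adj (hσ v)).1 hv]
    · simp [hv, (C.eq_zero_iff_ne_zero_of_adj (hσ' v)).2 hv]
  · dsimp only
    split_ifs
    · exact hσ v
    · exact (hσ' v).symm

lemma deleteEdges_range_adj {m : V → V} (hm : Involutive m) {u w : V} :
    (G.deleteEdges (Set.range fun v => s(v, m v))).Adj u w ↔ G.Adj u w ∧ w ≠ m u := by
  simp only [deleteEdges_adj, Set.mem_range, Sym2.eq_iff, not_exists]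
  refine and_congr_right fun _ => ⟨fun h hw => h u (.inl ⟨rfl, hw.symm⟩), ?_⟩
  rintro hw x (⟨rfl, rfl⟩ | ⟨rfl, rfl⟩)
  · exact hw rfl
  · exact hw (hm x).symm

variable [Fintype V] [DecidableRel G.Adj]

theorem IsRegularOfDegree.exists_perm_adj {k : ℕ} (hG : G.IsRegularOfDegree k)
    (hk : 0 < k) : ∃ σ : Perm V, ∀ v, G.Adj v (σ v) := by
  classical
  have hsymm (a : V) : ({i | a ∈ G.neighborFinset i} : Finset V) = G.neighborFinset a := by
    ext; simp [adj_comm]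
  have hcard (v : V) : #(G.neighborFinset v) = k := (G.card_neighborFinset_eq_degree v).trans (hG v)
  obtain ⟨f, hf, hfG⟩ := exists_injective_forall_mem_of_card_le (fun v => G.neighborFinset v) hk
    (fun v => (hcard v).ge) fun a => (hsymm a ▸ hcard a).le
  exact ⟨.ofBijective f (Finite.injective_iff_bijective.1 hf),
    fun v => (G.mem_neighborFinset _ _).1 (hfG v)⟩

theorem IsRegularOfDegree.deleteEdges_range {k : ℕ}
    (hG : G.IsRegularOfDegree (k + 1)) {m : V → V} (hm : Involutive m) (hGm : ∀ v, G.Adj v (m v))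
    [DecidableRel (G.deleteEdges (Set.range fun v => s(v, m v))).Adj] :
    (G.deleteEdges (Set.range fun v => s(v, m v))).IsRegularOfDegree k := by
  classical
  intro v
  have : (G.deleteEdges (Set.range fun v => s(v, m v))).neighborFinset v =
      (G.neighborFinset v).erase (m v) := by
    ext w
    rw [mem_neighborFinset, deleteEdges_range_adj hm, mem_erase, mem_neighborFinset, and_comm]
  rw [← card_neighborFinset_eq_degree, this,
    card_erase_of_mem ((G.mem_neighborFinset _ _).2 (hGm v)), card_neighborFinset_eq_degree, hG v,
    Nat.add_sub_cancel]

theorem Colorable.exists_involutive_decomposition (hG : G.Colorable 2) {k : ℕ}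
    (hreg : G.IsRegularOfDegree k) :
    ∃ m : Fin k → V → V, (∀ i, Involutive (m i)) ∧ (∀ i v, G.Adj v (m i v)) ∧
      (∀ v, Injective (m · v)) ∧ ∀ u v, G.Adj u v → ∃ i, m i u = v := by
  classical
  induction k generalizing G with
  | zero =>
    refine ⟨Fin.elim0, fun i => i.elim0, fun i => i.elim0, fun _ => injective_of_subsingleton _,
      fun u v huv => ?_⟩
    have : G.neighborFinset u = ∅ :=
      card_eq_zero.1 ((G.card_neighborFinset_eq_degree u).trans (hreg u))
    simpa [this] using (G.mem_neighborFinset u v).2 huv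
  | succ k ih =>
    obtain ⟨σ, hσ⟩ := hreg.exists_perm_adj k.succ_pos
    obtain ⟨m₀, hm₀, hGm₀⟩ := hG.exists_involutive_adj hσ
    obtain ⟨m, hm, hGm, hinj, hcov⟩ := ih (hG.mono_left (G.deleteEdges_le _))
      (hreg.deleteEdges_range hm₀ hGm₀)
    have hm₀m (i : Fin k) (v : V) : m i v ≠ m₀ v := ((deleteEdges_range_adj hm₀).1 (hGm i v)).2
    refine ⟨Fin.cons m₀ m, Fin.cases hm₀ hm,
      Fin.cases hGm₀ fun i v => ((deleteEdges_range_adj hm₀).1 (hGm i v)).1, fun v => ?_,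
      fun u v huv => ?_⟩
    · have : (fun i => (Fin.cons m₀ m : Fin (k + 1) → V → V) i v) =
          Fin.cons (m₀ v) (fun i => m i v) := funext (Fin.cases rfl fun _ => rfl)
      rw [this, Fin.cons_injective_iff]
      exact ⟨fun ⟨i, hi⟩ => hm₀m i v hi, hinj v⟩
    · by_cases h : v = m₀ u
      · exact ⟨0, h.symm⟩
      · obtain ⟨i, hi⟩ := hcov u v ((deleteEdges_range_adj hm₀).2 ⟨huv, h⟩)
        exact ⟨i.succ, hi⟩

end SimpleGraph

/-- For every 3-regular bipartite graph `G`, there are two linear orders on the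
vertices such that the endpoints of every edge are consecutive in at least one
of the two orders. -/
theorem stmt0 {V : Type*} [Fintype V] (G : SimpleGraph V)
    (hreg : ∀ v : V, (G.neighborSet v).ncard = 3)
    (hbip : G.Colorable 2) :
    ∃ L1 L2 : LinearOrder V,
      ∀ u v : V, G.Adj u v → Consec L1 u v ∨ Consec L2 u v := by
  classical
  have hreg3 : G.IsRegularOfDegree 3 := fun v => by
    rw [← G.card_neighborSet_eq_degree, ← Nat.card_eq_fintype_card, Nat.card_coe_set_eq, hreg v]
  obtain ⟨m, hm, hGm, hinj, hcov⟩ := hbip.exists_involutive_decomposition hreg3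
  obtain ⟨C⟩ := hbip
  have hCm (i : Fin 3) (v : V) : C (m i v) = 0 ↔ ¬ C v = 0 :=
    C.eq_zero_iff_ne_zero_of_adj (hGm i v).symm
  obtain ⟨L₁, L₂, hL⟩ := exists_linearOrders_consec_of_involutive (C · = 0) (hm 0) (hm 1) (hm 2)
    (hCm 0) (hCm 1) (hCm 2) (fun v => (hinj v).ne (by decide)) (fun v => (hinj v).ne (by decide))
  refine ⟨L₁, L₂, fun u v huv => ?_⟩
  obtain ⟨i, rfl⟩ := hcov u v huv
  fin_cases i
  · exact (hL u).2.2
  · exact .inl (hL u).1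
  · exact .inr (hL u).2.1
end

section
/- Let H be a graph that is a disjoint union of paths, let M be a perfect matching on the vertex set V(H) with M disjoint from the edge set of H, and let L be a cycle on a subset of V(H) whose edges are disjoint from both E(H) and M, such that every vertex of L has degree at most 1 in H. Then L contains an edge {u,w} such that u and w have degree at most 1 in H and u and w lie in different connected components of H. -/
/-!
If every edge of `L` joined two vertices in the same component of `H`, then, `L` being
connected, its whole vertex set would lie in a single component of `H`. That component is a
finite path, which has at most two vertices of degree at most one, whereas `L` has at least
three vertices, all of `H`-degree at most one.
-/

open SimpleGraph Finset

/-- A graph is a disjoint union of paths iff it is acyclic and every vertex has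
degree at most 2. -/
def IsPathForest {V : Type*} (H : SimpleGraph V) : Prop :=
  H.IsAcyclic ∧ ∀ v : V, (H.neighborSet v).ncard ≤ 2

namespace SimpleGraph

variable {V : Type*}

theorem ncard_neighborSet_eq_degree [Fintype V] (G : SimpleGraph V) [DecidableRel G.Adj]
    (v : V) : (G.neighborSet v).ncard = G.degree v := by
  rw [Set.ncard_eq_toFinset_card', ← neighborFinset_def, card_neighborFinset_eq_degree]

theorem IsTree.ncard_degree_le_one_le_two [Fintype V] {G : SimpleGraph V} [DecidableRel G.Adj]
    (hG : G.IsTree) (hdeg : ∀ v, G.degree v ≤ 2) : {v | G.degree v ≤ 1}.ncard ≤ 2 := by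
  classical
  rw [Set.ncard_eq_toFinset_card', Set.toFinset_ofPred]
  set S : Finset V := {v | G.degree v ≤ 1}
  -- Handshake: `2 (n - 1) = ∑ deg ≤ #S + 2 (n - #S)`.
  have hedges := hG.card_edgeFinset
  have hsum := G.sum_degrees_eq_twice_card_edges
  have hS : ∑ v ∈ S, G.degree v ≤ #S * 1 :=
    sum_le_card_nsmul S _ 1 fun v hv => (mem_filter.mp hv).2
  have hSc : ∑ v ∈ Sᶜ, G.degree v ≤ #Sᶜ * 2 := sum_le_card_nsmul Sᶜ _ 2 fun v _ => hdeg v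
  have hsplit := sum_add_sum_compl S fun v => G.degree v
  have hcard := card_add_card_compl S
  omega

theorem Reachable.of_forall_adj {G G' : SimpleGraph V}
    (h : ∀ ⦃u w⦄, G.Adj u w → G'.Reachable u w) {u w : V} (huw : G.Reachable u w) :
    G'.Reachable u w := by
  obtain ⟨p⟩ := huw
  induction p with
  | nil => rfl
  | cons hadj _ ih => exact (h hadj).trans ih

end SimpleGraph

theorem IsPathForest.ncard_le_two_of_subset_supp {V : Type*} [Finite V] {H : SimpleGraph V}
    (hH : IsPathForest H) (C : H.ConnectedComponent) {s : Set V} (hsC : s ⊆ C.supp)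
    (hs : ∀ v ∈ s, (H.neighborSet v).ncard ≤ 1) : s.ncard ≤ 2 := by
  classical
  have := Fintype.ofFinite V
  have htree : (H.induce C.supp).IsTree := ⟨C.maximal_connected_induce_supp.1, hH.1.induce C.supp⟩
  have hdeg (x : C.supp) : (H.induce C.supp).degree x = (H.neighborSet x).ncard := by
    rw [ncard_neighborSet_eq_degree]
    exact degree_induce_of_neighborSet_subset fun y hy => C.mem_supp_of_adj_mem_supp x.2 hy
  calc s.ncard = (Subtype.val ⁻¹' s : Set C.supp).ncard :=
        (Set.ncard_preimage_of_injective_subset_range Subtype.val_injective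
          (by rwa [Subtype.range_coe])).symm
    _ ≤ {x | (H.induce C.supp).degree x ≤ 1}.ncard := by
        refine Set.ncard_le_ncard (fun x hx => ?_) (Set.toFinite _)
        rw [Set.mem_ofPred_eq, hdeg]
        exact hs x hx
    _ ≤ 2 := htree.ncard_degree_le_one_le_two fun x => (hdeg x).trans_le (hH.2 x)

theorem stmt3_general {V : Type*} [Fintype V] (H L : SimpleGraph V)
    (hH : IsPathForest H)
    (hLconn : (SimpleGraph.induce L.support L).Connected)
    (hLcard : 3 ≤ L.support.ncard)
    (hdegH : ∀ v ∈ L.support, (H.neighborSet v).ncard ≤ 1) :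
    ∃ u w : V, L.Adj u w ∧
      (H.neighborSet u).ncard ≤ 1 ∧ (H.neighborSet w).ncard ≤ 1 ∧
      H.connectedComponentMk u ≠ H.connectedComponentMk w := by
  by_contra! hsame
  have hL_reach_H ⦃u w : V⦄ (huw : L.Adj u w) : H.Reachable u w :=
    ConnectedComponent.exact <| hsame u w huw (hdegH u ⟨w, huw⟩) (hdegH w ⟨u, huw.symm⟩)
  obtain ⟨v₀, hv₀⟩ := hLconn.nonempty
  have hsub : L.support ⊆ (H.connectedComponentMk v₀).supp := fun v hv =>
    ConnectedComponent.sound <| Reachable.of_forall_adj hL_reach_H <|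
      (hLconn.preconnected ⟨v, hv⟩ ⟨v₀, hv₀⟩).map (Embedding.induce _).toHom
  have := hH.ncard_le_two_of_subset_supp _ hsub hdegH
  omega

/-- If `H` is a disjoint union of paths, `M` is a perfect matching edge-disjoint
from `H`, and `L` is a cycle (a connected 2-regular graph on at least 3 vertices)
whose edges are disjoint from both `H` and `M` and all of whose vertices have
degree at most 1 in `H`, then `L` has an edge `{u, w}` whose endpoints have degree
at most 1 in `H` and lie in different connected components of `H`. -/
theorem stmt3 {V : Type*} [Fintype V] (H M L : SimpleGraph V)
    (hH : IsPathForest H)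
    (hM : ∀ v : V, ∃! w : V, M.Adj v w)
    (hMH : Disjoint M H)
    (hLH : Disjoint L H) (hLM : Disjoint L M)
    (hLdeg : ∀ v ∈ L.support, (L.neighborSet v).ncard = 2)
    (hLconn : (SimpleGraph.induce L.support L).Connected)
    (hLcard : 3 ≤ L.support.ncard)
    (hdegH : ∀ v ∈ L.support, (H.neighborSet v).ncard ≤ 1) :
    ∃ u w : V, L.Adj u w ∧
      (H.neighborSet u).ncard ≤ 1 ∧ (H.neighborSet w).ncard ≤ 1 ∧
      H.connectedComponentMk u ≠ H.connectedComponentMk w :=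
  stmt3_general H L hH hLconn hLcard hdegH
end

section
/- Let ◁ be a linear order on a finite candidate set C, and let S ⊆ C be a set of candidates that are consecutive in ◁ (i.e., S is an interval of ◁). Then there exists a linear order π on C such that every candidate in S is ranked above every candidate not in S, and π is single-peaked with respect to ◁. -/
/-- A vote `v` is single-peaked with respect to an axis `ax` (both strict linear
orders, where `lt x y` means `x` is ranked above / preferred to `y` in a vote):
for all `a ◁ b ◁ c` or `c ◁ b ◁ a`, ranking `c` above `b` implies ranking `b` above `a`. -/
def SinglePeaked {C : Type*} (ax v : LinearOrder C) : Prop :=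
  ∀ a b c : C, ((ax.lt a b ∧ ax.lt b c) ∨ (ax.lt c b ∧ ax.lt b a)) →
    v.lt c b → v.lt b a

/-- `S` is an interval (set of consecutive candidates) of the axis `ax`. -/
def IsInterval {C : Type*} (ax : LinearOrder C) (S : Set C) : Prop :=
  ∀ x ∈ S, ∀ z ∈ S, ∀ y : C, ax.lt x y → ax.lt y z → y ∈ S

/-!
Let `U` be the set of candidates lying weakly to the right of some member of `S`. Rank `U` from
left to right, and below it the remaining candidates from right to left: this folds the axis at
the cut between `Uᶜ` and `U`, so every vote of this shape is single-peaked. Since `S` is an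
interval, it is an initial segment of `U` in the left-to-right order, so it comes first.
-/

theorem isInterval_iff_ordConnected {α : Type*} [LinearOrder α] {S : Set α} :
    IsInterval ‹_› S ↔ S.OrdConnected :=
  ⟨fun hS => Set.ordConnected_of_Ioo fun x hx z hz _ y hy => hS x hx z hz y hy.1 hy.2,
    fun hS _ hx _ hz _ hxy hyz => hS.out hx hz ⟨hxy.le, hyz.le⟩⟩

theorem Set.OrdConnected.lt_of_mem_upperClosure {α : Type*} [LinearOrder α] {S : Set α}
    (hS : S.OrdConnected) {s c : α} (hs : s ∈ S) (hc : c ∉ S) (hcU : c ∈ upperClosure S) :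
    s < c := by
  obtain ⟨s', hs', hs'c⟩ := mem_upperClosure.1 hcU
  by_contra! hcs
  exact hc (hS.out hs' hs ⟨hs'c, hcs⟩)

namespace UpperSet

variable {α : Type*} [LinearOrder α] (U : UpperSet α)

open Classical in
noncomputable def foldEmbedding (x : α) : α ⊕ₗ αᵒᵈ :=
  if x ∈ U then toLex (Sum.inl x) else toLex (Sum.inr (OrderDual.toDual x))

theorem foldEmbedding_injective : Function.Injective U.foldEmbedding := by
  intro x y
  unfold foldEmbedding
  split_ifs <;> simp

/-- The vote (`lt x y`: `x` is ranked above `y`) listing `U` in increasing order and then its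
complement in decreasing order. -/
@[reducible]
noncomputable def foldVote : LinearOrder α :=
  LinearOrder.lift' U.foldEmbedding U.foldEmbedding_injective

variable {U} {x y : α}

theorem foldVote_lt_iff_of_mem (hx : x ∈ U) (hy : y ∈ U) : U.foldVote.lt x y ↔ x < y := by
  show U.foldEmbedding x < U.foldEmbedding y ↔ _
  simp [foldEmbedding, hx, hy]

theorem foldVote_lt_iff_of_notMem (hx : x ∉ U) (hy : y ∉ U) : U.foldVote.lt x y ↔ y < x := by
  show U.foldEmbedding x < U.foldEmbedding y ↔ _
  simp [foldEmbedding, hx, hy]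

theorem foldVote_lt_of_mem_of_notMem (hx : x ∈ U) (hy : y ∉ U) : U.foldVote.lt x y := by
  show U.foldEmbedding x < U.foldEmbedding y
  simp [foldEmbedding, hx, hy]

theorem singlePeaked_foldVote : SinglePeaked ‹_› U.foldVote := by
  rintro a b c (⟨hab, hbc⟩ | ⟨hcb, hba⟩) hvote
  · by_cases hb : b ∈ U
    · have hc : c ∈ U := U.upper hbc.le hb
      exact absurd ((foldVote_lt_iff_of_mem hc hb).1 hvote) hbc.not_gt
    · have ha : a ∉ U := fun ha => hb (U.upper hab.le ha)
      exact (foldVote_lt_iff_of_notMem hb ha).2 hab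
  · by_cases hb : b ∈ U
    · have ha : a ∈ U := U.upper hba.le hb
      exact (foldVote_lt_iff_of_mem hb ha).2 hba
    · have hc : c ∉ U := fun hc => hb (U.upper hcb.le hc)
      exact absurd ((foldVote_lt_iff_of_notMem hc hb).1 hvote) hcb.not_gt

end UpperSet

open UpperSet in
theorem stmt5_general {C : Type*} (ax : LinearOrder C) (S : Set C)
    (hS : IsInterval ax S) :
    ∃ π : LinearOrder C,
      (∀ s ∈ S, ∀ c ∉ S, π.lt s c) ∧ SinglePeaked ax π := by
  let := ax
  refine ⟨(upperClosure S).foldVote, fun s hs c hc => ?_, singlePeaked_foldVote⟩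
  have hsU : s ∈ upperClosure S := subset_upperClosure hs
  by_cases hcU : c ∈ upperClosure S
  · exact (foldVote_lt_iff_of_mem hsU hcU).2
      ((isInterval_iff_ordConnected.1 hS).lt_of_mem_upperClosure hs hc hcU)
  · exact foldVote_lt_of_mem_of_notMem hsU hcU

/-- If `S` is an interval of the axis `◁`, then there is a linear order `π` on
`C` ranking every candidate of `S` above every candidate outside `S` that is
single-peaked with respect to `◁`. -/
theorem stmt5 {C : Type*} [Fintype C] (ax : LinearOrder C) (S : Set C)
    (hS : IsInterval ax S) :
    ∃ π : LinearOrder C,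
      (∀ s ∈ S, ∀ c ∉ S, π.lt s c) ∧ SinglePeaked ax π :=
  stmt5_general ax S hS
end

section
/- If an election (C, Π) is single-peaked with respect to some axis, then it contains no worst-diverse structure: there do not exist votes πx, πy, πz ∈ Π and candidates a, b, c ∈ C with πx ranking a below both b and c, πy ranking b below both a and c, and πz ranking c below both a and b. -/
/-!
Of three distinct candidates, one lies strictly between the other two on the axis. A vote
that is single-peaked along the axis never ranks such a middle candidate below both outer ones,
so the vote of the structure that ranks it last cannot be single-peaked.
-/

section
variable {C : Type*}

def StrictlyBetween (ax : LinearOrder C) (x m y : C) : Prop :=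
  (ax.lt x m ∧ ax.lt m y) ∨ (ax.lt y m ∧ ax.lt m x)

theorem strictlyBetween_of_ne (ax : LinearOrder C) {a b c : C}
    (hab : a ≠ b) (hbc : b ≠ c) (hac : a ≠ c) :
    StrictlyBetween ax b a c ∨ StrictlyBetween ax a b c ∨ StrictlyBetween ax a c b := by
  let _ := ax
  unfold StrictlyBetween
  rcases hab.lt_or_gt with hab | hab <;> rcases hbc.lt_or_gt with hbc | hbc <;>
    rcases hac.lt_or_gt with hac | hac <;> tauto

theorem SinglePeaked.not_lt_and_lt {ax v : LinearOrder C} (h : SinglePeaked ax v) {x m y : C}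
    (hm : StrictlyBetween ax x m y) : ¬ (v.lt x m ∧ v.lt y m) := by
  let _ := v
  rintro ⟨hx, hy⟩
  exact lt_asymm hx (h x m y hm hy)

end

/-- A single-peaked election contains no worst-diverse structure. -/
theorem stmt10 {C : Type*} (E : Multiset (LinearOrder C))
    (hsp : ∃ ax : LinearOrder C, ∀ v ∈ E, SinglePeaked ax v) :
    ¬ ∃ πx ∈ E, ∃ πy ∈ E, ∃ πz ∈ E, ∃ a b c : C,
        πx.lt b a ∧ πx.lt c a ∧ πy.lt a b ∧ πy.lt c b ∧ πz.lt a c ∧ πz.lt b c := by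
  rintro ⟨πx, hπx, πy, hπy, πz, hπz, a, b, c, hba, hca, hab, hcb, hac, hbc⟩
  obtain ⟨ax, hax⟩ := hsp
  have hab' : a ≠ b := @ne_of_lt _ πy.toPreorder _ _ hab
  have hbc' : b ≠ c := @ne_of_lt _ πz.toPreorder _ _ hbc
  have hac' : a ≠ c := @ne_of_lt _ πz.toPreorder _ _ hac
  rcases strictlyBetween_of_ne ax hab' hbc' hac' with ha | hb | hc
  · exact (hax πx hπx).not_lt_and_lt ha ⟨hba, hca⟩
  · exact (hax πy hπy).not_lt_and_lt hb ⟨hab, hcb⟩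
  · exact (hax πz hπz).not_lt_and_lt hc ⟨hac, hbc⟩
end

section
/- If an election (C, Π) is single-peaked with respect to some axis, then it contains no α-structure: there do not exist votes πx, πy ∈ Π and candidates a, b, c, d ∈ C such that πx ranks a above b, b above c, and d above b, while πy ranks c above b, b above a, and d above b. -/
/-!
In a single-peaked vote, a candidate lying strictly between two others on the axis
is never ranked below both of them. In an α-structure, `πx` ranks `c` below `a` and `b`, and `πy`
ranks `a` below `b` and `c`, so `b` must lie between `a` and `c` on the axis. Then `d ≠ b` lies on
the side of `a` or of `c`, so `b` lies between `a` and `d` (contradicting `πx`) or between `c`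
and `d` (contradicting `πy`).
-/

section Between

variable {α : Type*}

def Between [LT α] (x y z : α) : Prop :=
  x < y ∧ y < z ∨ z < y ∧ y < x

variable [LinearOrder α] {x y z : α}

theorem between_trichotomy (hxy : x ≠ y) (hyz : y ≠ z) (hxz : x ≠ z) :
    Between x y z ∨ Between y x z ∨ Between x z y := by
  unfold Between
  rcases hxy.lt_or_gt with hxy | hxy <;> rcases hyz.lt_or_gt with hyz | hyz <;>
    rcases hxz.lt_or_gt with hxz | hxz <;> tauto

theorem Between.between_or_between (h : Between x y z) {w : α} (hw : w ≠ y) :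
    Between x y w ∨ Between z y w := by
  unfold Between at *
  rcases hw.lt_or_gt with hw | hw <;> tauto

end Between

theorem SinglePeaked.not_lt_of_between {C : Type*} {ax v : LinearOrder C}
    (h : SinglePeaked ax v) {x y z : C} (hxyz : @Between C ax.toLT x y z) (hxy : v.lt x y) :
    ¬ v.lt z y :=
  fun hzy => @lt_asymm C v.toPreorder _ _ hxy (h x y z hxyz hzy)

/-- A single-peaked election contains no α-structure. -/
theorem stmt11 {C : Type*} (E : Multiset (LinearOrder C))
    (hsp : ∃ ax : LinearOrder C, ∀ v ∈ E, SinglePeaked ax v) :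
    ¬ ∃ πx ∈ E, ∃ πy ∈ E, ∃ a b c d : C,
        πx.lt a b ∧ πx.lt b c ∧ πx.lt d b ∧
        πy.lt c b ∧ πy.lt b a ∧ πy.lt d b := by
  rintro ⟨πx, hx, πy, hy, a, b, c, d, hab, hbc, hdb, hcb, hba, hdb'⟩
  obtain ⟨ax, hax⟩ := hsp
  have hspx := hax πx hx
  have hspy := hax πy hy
  have hne : ∀ {x y : C}, πx.lt x y → x ≠ y := fun h => @ne_of_lt C πx.toPreorder _ _ h
  have hac : πx.lt a c := @lt_trans C πx.toPreorder _ _ _ hab hbc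
  have hca : πy.lt c a := @lt_trans C πy.toPreorder _ _ _ hcb hba
  let := ax
  have hbtw : Between a b c := by
    rcases between_trichotomy (hne hab) (hne hbc) (hne hac) with h | h | h
    · exact h
    · exact absurd hca (hspy.not_lt_of_between h hba)
    · exact absurd hbc (hspx.not_lt_of_between h hac)
  rcases hbtw.between_or_between (hne hdb) with h | h
  · exact hspx.not_lt_of_between h hab hdb
  · exact hspy.not_lt_of_between h hcb hdb'
end

section
/- Let π and π' be two linear orders on C that are both single-peaked with respect to the same axis ◁, and suppose the set of candidates π ranks above p is a subset of the set of candidates π' ranks above p, where in both votes all candidates ranked above p lie on the same side of p in ◁. Then: if every candidate ranked above p in π' also lies on the left of p in ◁ (respectively right), the set Ab(π,p) is an initial (respectively final) interval of Ab(π',p) with respect to ◁ restricted to that side. -/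
theorem SinglePeaked.lt_of_between {C : Type*} {ax π : LinearOrder C} (hπ : SinglePeaked ax π)
    {p x y : C} (hbetween : (ax.lt p y ∧ ax.lt y x) ∨ (ax.lt x y ∧ ax.lt y p))
    (hx : π.lt x p) : π.lt y p := by
  rcases @lt_trichotomy C π y p with hyp | rfl | hpy
  · exact hyp
  · rcases hbetween with ⟨hyy, -⟩ | ⟨-, hyy⟩ <;> exact absurd hyy (@lt_irrefl C ax.toPreorder y)
  · exact hπ p y x hbetween (@lt_trans C π.toPreorder x p y hx hpy)

theorem stmt12_general {C : Type*} (ax π π' : LinearOrder C) (p : C)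
    (h1 : SinglePeaked ax π) :
    ((∀ c : C, π'.lt c p → ax.lt c p) →
      ∀ x y : C, π.lt x p → π'.lt y p → ax.lt x y → π.lt y p) ∧
    ((∀ c : C, π'.lt c p → ax.lt p c) →
      ∀ x y : C, π.lt x p → π'.lt y p → ax.lt y x → π.lt y p) :=
  ⟨fun hleft _ y hx hy hxy => h1.lt_of_between (Or.inr ⟨hxy, hleft y hy⟩) hx,
    fun hright _ y hx hy hyx => h1.lt_of_between (Or.inl ⟨hright y hy, hyx⟩) hx⟩

/-- Let `π, π'` be single-peaked w.r.t. the axis `ax`, with the candidates ranked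
above `p` in `π` a subset of those ranked above `p` in `π'`, and in both votes all
candidates above `p` on the same side of `p` in the axis.  If that side is the left
(resp. right), then `Ab(π,p)` is the segment of `Ab(π',p)` closest to `p`: any
candidate of `Ab(π',p)` lying between a member of `Ab(π,p)` and `p` on the axis is
also in `Ab(π,p)`. -/
theorem stmt12 {C : Type*} [Fintype C] (ax π π' : LinearOrder C) (p : C)
    (h1 : SinglePeaked ax π) (h2 : SinglePeaked ax π')
    (hsub : ∀ c : C, π.lt c p → π'.lt c p)
    (hside : (∀ c : C, π'.lt c p → ax.lt c p) ∨ (∀ c : C, π'.lt c p → ax.lt p c)) :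
    ((∀ c : C, π'.lt c p → ax.lt c p) →
      ∀ x y : C, π.lt x p → π'.lt y p → ax.lt x y → π.lt y p) ∧
    ((∀ c : C, π'.lt c p → ax.lt p c) →
      ∀ x y : C, π.lt x p → π'.lt y p → ax.lt y x → π.lt y p) :=
  stmt12_general ax π π' p h1
end

section
/- Consider a finite multiset Π of linear orders on C all single-peaked with respect to a common axis ◁, and a fixed candidate p, such that for every vote in Π all candidates ranked above p lie to the left of p in ◁. Order the votes as π_1, ..., π_t so that the rank of p is non-increasing, i.e., π_x(p) ≥ π_{x+1}(p) for all x. Then for every x, the set of candidates ranked above p in π_{x+1} is a subset of the set of candidates ranked above p in π_x. -/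
/-- The rank (position) of `c` in the vote `v`: 1 plus the number of candidates
ranked above `c`. -/
noncomputable def rank {C : Type*} (v : LinearOrder C) (c : C) : ℕ :=
  1 + {c' : C | v.lt c' c}.ncard

/-!
When every candidate ranked above `p` lies left of `p`, single-peakedness makes the set of
candidates ranked above `p` an interval of the axis ending just before `p`. Such sets form a
chain under inclusion, and within a chain of finite sets the smaller cardinality, i.e. the
smaller rank of `p`, forces the inclusion.
-/

section

variable {C : Type*}

def rankedAbove (v : LinearOrder C) (p : C) : Set C := {c | v.lt c p}

theorem rank_eq_one_add_ncard_rankedAbove (v : LinearOrder C) (p : C) :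
    rank v p = 1 + (rankedAbove v p).ncard := rfl

theorem SinglePeaked.lt_of_lt_of_axis_between {ax v : LinearOrder C} (hv : SinglePeaked ax v)
    {a b p : C} (ha : v.lt a p) (hab : ax.lt a b) (hbp : ax.lt b p) : v.lt b p := by
  by_contra hb
  have hpb : v.lt p b := by
    rcases @lt_trichotomy C v b p with h | rfl | h
    · exact absurd h hb
    · exact absurd hbp (@lt_irrefl C ax.toPreorder b)
    · exact h
  exact hb (@lt_trans C v.toPreorder _ _ _ (hv a b p (Or.inl ⟨hab, hbp⟩) hpb) ha)

theorem rankedAbove_subset_or_subset {ax v w : LinearOrder C} {p : C}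
    (hv : SinglePeaked ax v) (hw : SinglePeaked ax w)
    (hvl : ∀ c, v.lt c p → ax.lt c p) (hwl : ∀ c, w.lt c p → ax.lt c p) :
    rankedAbove v p ⊆ rankedAbove w p ∨ rankedAbove w p ⊆ rankedAbove v p := by
  rw [or_iff_not_imp_left, Set.not_subset]
  rintro ⟨c, hcv, hcw⟩ d hdw
  rcases @lt_trichotomy C ax c d with hcd | rfl | hdc
  · exact hv.lt_of_lt_of_axis_between hcv hcd (hwl d hdw)
  · exact absurd hdw hcw
  · exact absurd (hw.lt_of_lt_of_axis_between hdw hdc (hvl c hcv)) hcw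

end

/-- For a sequence of votes single-peaked w.r.t. a common axis, all of whose
above-`p` candidates lie to the left of `p` on the axis, ordered so that the rank
of `p` is non-increasing, the above-`p` set of each vote contains that of the next. -/
theorem stmt13 {C : Type*} [Fintype C] (ax : LinearOrder C) (p : C) (t : ℕ)
    (π : Fin (t + 1) → LinearOrder C)
    (hsp : ∀ i, SinglePeaked ax (π i))
    (hleft : ∀ i, ∀ c : C, (π i).lt c p → ax.lt c p)
    (hmono : ∀ i : Fin t, rank (π i.succ) p ≤ rank (π i.castSucc) p) :
    ∀ i : Fin t, ∀ c : C, (π i.succ).lt c p → (π i.castSucc).lt c p := by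
  intro i
  have hcard : (rankedAbove (π i.succ) p).ncard ≤ (rankedAbove (π i.castSucc) p).ncard := by
    have := hmono i
    rw [rank_eq_one_add_ncard_rankedAbove, rank_eq_one_add_ncard_rankedAbove] at this
    omega
  rcases rankedAbove_subset_or_subset (hsp i.succ) (hsp i.castSucc) (hleft _) (hleft _)
    with hsub | hsup
  · exact hsub
  · exact (Set.eq_of_subset_of_ncard_le hsup hcard (Set.toFinite _)).symm.subset
end

section
/- Let (C, Π) be an election and p ∈ C. If there exists a subset of at most ℓ votes whose deletion makes p the Condorcet winner, then there exists such a subset in which no vote ranks p first. -/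
/-- `prefCount E c c'` is the number of votes in `E` preferring `c` to `c'`. -/
def prefCount {C : Type*} (E : Multiset (LinearOrder C)) (c c' : C) : ℕ :=
  letI : DecidablePred (fun v : LinearOrder C => v.lt c c') :=
    fun v => v.toDecidableLT c c'
  E.countP (fun v => v.lt c c')

/-- `p` is the Condorcet winner of the election `E`. -/
def CondorcetWinner {C : Type*} (E : Multiset (LinearOrder C)) (p : C) : Prop :=
  ∀ c : C, c ≠ p → prefCount E c p < prefCount E p c

section

variable {C : Type*}

lemma prefCount_add (A B : Multiset (LinearOrder C)) (c c' : C) :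
    prefCount (A + B) c c' = prefCount A c c' + prefCount B c c' :=
  Multiset.countP_add _ _ _

lemma prefCount_eq_zero_of_forall_lt {A : Multiset (LinearOrder C)} {c c' : C}
    (hA : ∀ v ∈ A, v.lt c' c) : prefCount A c c' = 0 :=
  Multiset.countP_eq_zero.2 fun v hv => letI := v; lt_asymm (hA v hv)

lemma CondorcetWinner.add_of_forall_ranks_first {R A : Multiset (LinearOrder C)} {p : C}
    (hR : CondorcetWinner R p) (hA : ∀ v ∈ A, ∀ c : C, c ≠ p → v.lt p c) :
    CondorcetWinner (R + A) p := by
  intro c hc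
  have hAc : prefCount A c p = 0 := prefCount_eq_zero_of_forall_lt fun v hv => hA v hv c hc
  rw [prefCount_add, prefCount_add, hAc]
  exact Nat.lt_add_right _ (hR c hc)

end

/-- If at most `ℓ` votes can be deleted from `E` so that `p` becomes the Condorcet
winner (`E = S + R`, deleting `S` and keeping `R`), then this can also be done
deleting no vote that ranks `p` first. -/
theorem stmt17 {C : Type*} (E : Multiset (LinearOrder C)) (p : C) (ℓ : ℕ)
    (h : ∃ S R : Multiset (LinearOrder C),
        S + R = E ∧ Multiset.card S ≤ ℓ ∧ CondorcetWinner R p) :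
    ∃ S R : Multiset (LinearOrder C),
      S + R = E ∧ Multiset.card S ≤ ℓ ∧ CondorcetWinner R p ∧
      ∀ v ∈ S, ¬ (∀ c : C, c ≠ p → v.lt p c) := by
  classical
  obtain ⟨S, R, rfl, hcard, hwin⟩ := h
  let RanksFirst : LinearOrder C → Prop := fun v => ∀ c : C, c ≠ p → v.lt p c
  refine ⟨S.filter (¬ RanksFirst ·), R + S.filter RanksFirst, ?_, ?_, ?_, ?_⟩
  · conv_rhs => rw [← Multiset.filter_add_not RanksFirst S]
    abel
  · exact (Multiset.card_le_card (Multiset.filter_le _ _)).trans hcard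
  · exact hwin.add_of_forall_ranks_first fun v hv => (Multiset.mem_filter.1 hv).2
  · exact fun v hv => (Multiset.mem_filter.1 hv).2
end
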